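/- arXiv:2502.03590 — 3 statements merged into one kernel-verified Lean document; each statement's English description precedes it below -/
import Mathlib

section
/- Let H be a separable Hilbert space and (p_n) a sequence of rank-one orthogonal projections converging in the weak operator topology to a rank-one orthogonal projection p. Then Tr(p_n a) → Tr(p a) for every bounded operator a on H. -/
noncomputable section

/-- A rank-one orthogonal projection on a Hilbert space: a self-adjoint idempotent
whose range is one-dimensional (equivalently, of trace `1`). -/
def IsRankOneProjection {H : Type*} [NormedAddCommGroup H] [InnerProductSpace ℂ H] [CompleteSpace H]
    (p : H →L[ℂ] H) : Prop :=
  IsSelfAdjoint p ∧ p * p = p ∧ Module.finrank ℂ (LinearMap.range (p : H →ₗ[ℂ] H)) = 1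

open scoped InnerProductSpace in
theorem rank_one_apply' {H : Type*} [NormedAddCommGroup H] [InnerProductSpace ℂ H] [CompleteSpace H]
    (p : H →L[ℂ] H) (hp : IsRankOneProjection p) (v : H) (hv : ‖v‖ = 1) (hvp : p v = v)
    (x : H) : p x = ⟪v, x⟫_ℂ • v := by
  have hvne : v ≠ 0 := by intro h; rw [h, norm_zero] at hv; norm_num at hv
  have hvmem : v ∈ LinearMap.range (p : H →ₗ[ℂ] H) := ⟨v, hvp⟩
  have hxmem : p x ∈ LinearMap.range (p : H →ₗ[ℂ] H) := ⟨x, rfl⟩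
  have hvne' : (⟨v, hvmem⟩ : LinearMap.range (p : H →ₗ[ℂ] H)) ≠ 0 := by
    simpa [Subtype.ext_iff] using hvne
  obtain ⟨c, hc⟩ := (finrank_eq_one_iff_of_nonzero' _ hvne').mp hp.2.2 ⟨p x, hxmem⟩
  have hc' : c • v = p x := congrArg Subtype.val hc
  have hsym := ContinuousLinearMap.isSelfAdjoint_iff_isSymmetric.mp hp.1
  have h1 : ⟪v, p x⟫_ℂ = ⟪v, x⟫_ℂ := by
    have := hsym v x
    simp only [ContinuousLinearMap.coe_coe] at this
    rw [← this, hvp]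
  rw [← hc', inner_smul_right, inner_self_eq_norm_sq_to_K, hv] at h1
  simp at h1
  rw [← hc', h1]


open scoped InnerProductSpace in
/-- If a sequence `(p_n)` of rank-one orthogonal projections on a
separable Hilbert space converges in the weak operator topology to a rank-one
orthogonal projection `p`, then `Tr(p_n a) → Tr(p a)` for every bounded operator
`a`.  (For a rank-one projection with unit eigenvector `v`, `Tr(p a) = ⟪v, a v⟫`.) -/
theorem trace_tendsto_of_wot_tendsto
    {H : Type*} [NormedAddCommGroup H] [InnerProductSpace ℂ H] [CompleteSpace H]
    [TopologicalSpace.SeparableSpace H]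
    (p : ℕ → H →L[ℂ] H) (q : H →L[ℂ] H)
    (hp : ∀ n, IsRankOneProjection (p n)) (hq : IsRankOneProjection q)
    (hconv : ∀ f g : H,
      Filter.Tendsto (fun n => ⟪g, p n f⟫_ℂ) Filter.atTop (nhds ⟪g, q f⟫_ℂ))
    (v : ℕ → H) (hv : ∀ n, ‖v n‖ = 1) (hvp : ∀ n, p n (v n) = v n)
    (w : H) (hw : ‖w‖ = 1) (hwq : q w = w)
    (a : H →L[ℂ] H) :
    Filter.Tendsto (fun n => ⟪v n, a (v n)⟫_ℂ) Filter.atTop (nhds ⟪w, a w⟫_ℂ) := by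
  set d : ℕ → ℂ := fun n => ⟪w, v n⟫_ℂ with hd
  set e : ℕ → H := fun n => v n - d n • w with he
  -- Step A : conj (d n) * d n → 1
  have hpnw : ∀ n, p n w = (starRingEnd ℂ (d n)) • v n := by
    intro n
    rw [rank_one_apply' (p n) (hp n) (v n) (hv n) (hvp n) w, ← inner_conj_symm]
  have h1 : Filter.Tendsto (fun n => starRingEnd ℂ (d n) * d n) Filter.atTop (nhds 1) := by
    have := hconv w w
    rw [hwq, inner_self_eq_norm_sq_to_K, hw] at this
    simp only [hpnw, inner_smul_right] at this
    norm_num at this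
    convert this using 2
  -- |d n| ≤ 1
  have hdle : ∀ n, ‖d n‖ ≤ 1 := fun n => by
    simpa [hw, hv n] using norm_inner_le_norm (𝕜 := ℂ) w (v n)
  -- ‖e n‖ ^ 2 = 1 - ‖d n‖ ^ 2
  have hesq : ∀ n, ‖e n‖ ^ 2 = 1 - ‖d n‖ ^ 2 := by
    intro n
    have h2 : ⟪v n, d n • w⟫_ℂ = d n * starRingEnd ℂ (d n) := by
      rw [inner_smul_right, ← inner_conj_symm]
    have h3 := @norm_sub_sq ℂ H _ _ _ (v n) (d n • w)
    rw [h2, hv n, norm_smul, hw, Complex.mul_conj'] at h3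
    have h4 : RCLike.re (((‖d n‖ : ℂ)) ^ 2) = ‖d n‖ ^ 2 := by norm_cast
    rw [h4] at h3
    simp only [he]
    rw [h3]
    ring
  -- ‖e n‖ → 0
  have hdsq : Filter.Tendsto (fun n => ‖d n‖ ^ 2) Filter.atTop (nhds 1) := by
    have hre := (Complex.continuous_re.tendsto 1).comp h1
    have heq : (fun n => Complex.re (starRingEnd ℂ (d n) * d n)) = fun n => ‖d n‖ ^ 2 := by
      funext n
      rw [mul_comm, Complex.mul_conj']
      norm_cast
    simp only [Function.comp_def] at hre
    rwa [heq] at hre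
  have he0 : Filter.Tendsto (fun n => ‖e n‖) Filter.atTop (nhds 0) := by
    have h4 : Filter.Tendsto (fun n => 1 - ‖d n‖ ^ 2) Filter.atTop (nhds 0) := by
      simpa using (tendsto_const_nhds (x := (1:ℝ))).sub hdsq
    have h5 : Filter.Tendsto (fun n => Real.sqrt (1 - ‖d n‖ ^ 2)) Filter.atTop (nhds 0) := by
      simpa [Function.comp_def] using (Real.continuous_sqrt.tendsto 0).comp h4
    convert h5 using 2 with n
    rw [← hesq n, Real.sqrt_sq (norm_nonneg _)]
  -- decomposition identity
  have key : ∀ n, ⟪v n, a (v n)⟫_ℂ =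
      starRingEnd ℂ (d n) * d n * ⟪w, a w⟫_ℂ + (⟪e n, a (v n)⟫_ℂ + ⟪d n • w, a (e n)⟫_ℂ) := by
    intro n
    have hx : v n = d n • w + e n := by simp [he]
    have hax : a (v n) = d n • a w + a (e n) := by
      conv_lhs => rw [hx]
      rw [map_add, map_smul]
    nth_rewrite 1 [hx]
    rw [hax]
    simp only [inner_add_left, inner_add_right, inner_smul_left, inner_smul_right]
    ring
  -- error term → 0
  have herr : Filter.Tendsto (fun n => ⟪e n, a (v n)⟫_ℂ + ⟪d n • w, a (e n)⟫_ℂ)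
      Filter.atTop (nhds 0) := by
    have hg : Filter.Tendsto (fun n => 2 * ‖a‖ * ‖e n‖) Filter.atTop (nhds 0) := by
      simpa using (tendsto_const_nhds (x := 2 * ‖a‖)).mul he0
    refine squeeze_zero_norm (fun n => ?_) hg
    have b1 : ‖⟪e n, a (v n)⟫_ℂ‖ ≤ ‖e n‖ * ‖a‖ := by
      calc ‖⟪e n, a (v n)⟫_ℂ‖ ≤ ‖e n‖ * ‖a (v n)‖ := norm_inner_le_norm _ _
      _ ≤ ‖e n‖ * (‖a‖ * ‖v n‖) :=
          mul_le_mul_of_nonneg_left (a.le_opNorm _) (norm_nonneg _)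
      _ = ‖e n‖ * ‖a‖ := by rw [hv n]; ring
    have b2 : ‖⟪d n • w, a (e n)⟫_ℂ‖ ≤ ‖a‖ * ‖e n‖ := by
      calc ‖⟪d n • w, a (e n)⟫_ℂ‖ ≤ ‖d n • w‖ * ‖a (e n)‖ := norm_inner_le_norm _ _
      _ ≤ 1 * (‖a‖ * ‖e n‖) := by
          apply mul_le_mul _ (a.le_opNorm _) (norm_nonneg _) (by norm_num)
          rw [norm_smul, hw, mul_one]; exact hdle n
      _ = ‖a‖ * ‖e n‖ := one_mul _
    calc ‖⟪e n, a (v n)⟫_ℂ + ⟪d n • w, a (e n)⟫_ℂ‖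
        ≤ ‖⟪e n, a (v n)⟫_ℂ‖ + ‖⟪d n • w, a (e n)⟫_ℂ‖ := norm_add_le _ _
      _ ≤ ‖e n‖ * ‖a‖ + ‖a‖ * ‖e n‖ := add_le_add b1 b2
      _ = 2 * ‖a‖ * ‖e n‖ := by ring
  have hmain : Filter.Tendsto
      (fun n => starRingEnd ℂ (d n) * d n * ⟪w, a w⟫_ℂ +
        (⟪e n, a (v n)⟫_ℂ + ⟪d n • w, a (e n)⟫_ℂ)) Filter.atTop (nhds ⟪w, a w⟫_ℂ) := by
    have := (h1.mul_const ⟪w, a w⟫_ℂ).add herr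
    simpa using this
  exact hmain.congr (fun n => (key n).symm)
end
end

section
/- Let H be a separable Hilbert space and (p_n) a sequence of rank-one orthogonal projections converging weakly (in operator topology) to a rank-one orthogonal projection p. Then ‖p_n − p‖₁ → 0, i.e., p_n converges to p in trace norm. -/
open scoped ENNReal

noncomputable section

open scoped InnerProductSpace in
/-- The trace norm `‖T‖₁` of a bounded operator on a Hilbert space, via the
classical formula `‖T‖₁ = sup { Σᵢ |⟪eᵢ, T fᵢ⟫| }`, the supremum running over all
pairs of finite orthonormal families `(eᵢ)`, `(fᵢ)` (value `∞` if `T` is not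
trace class). -/
noncomputable def traceNorm {H : Type*} [NormedAddCommGroup H] [InnerProductSpace ℂ H]
    (T : H →L[ℂ] H) : ℝ≥0∞ :=
  ⨆ (n : ℕ) (e : Fin n → H) (f : Fin n → H) (_ : Orthonormal ℂ e) (_ : Orthonormal ℂ f),
    ∑ i, (‖⟪e i, T (f i)⟫_ℂ‖₊ : ℝ≥0∞)

section AuxLemmas
open scoped InnerProductSpace
variable {H : Type*} [NormedAddCommGroup H] [InnerProductSpace ℂ H]

lemma bessel_pair {n : ℕ} {e f : Fin n → H} (he : Orthonormal ℂ e) (hf : Orthonormal ℂ f)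
    (x y : H) : ∑ i, ‖⟪e i, x⟫_ℂ‖ * ‖⟪f i, y⟫_ℂ‖ ≤ ‖x‖ * ‖y‖ := by
  have hs : (∑ i, ‖⟪e i, x⟫_ℂ‖ * ‖⟪f i, y⟫_ℂ‖) ^ 2 ≤
      (∑ i, ‖⟪e i, x⟫_ℂ‖ ^ 2) * ∑ i, ‖⟪f i, y⟫_ℂ‖ ^ 2 :=
    Finset.sum_mul_sq_le_sq_mul_sq _ _ _
  have hx : ∑ i, ‖⟪e i, x⟫_ℂ‖ ^ 2 ≤ ‖x‖ ^ 2 := he.sum_inner_products_le x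
  have hy : ∑ i, ‖⟪f i, y⟫_ℂ‖ ^ 2 ≤ ‖y‖ ^ 2 := hf.sum_inner_products_le y
  have h2 : (∑ i, ‖⟪e i, x⟫_ℂ‖ * ‖⟪f i, y⟫_ℂ‖) ^ 2 ≤ (‖x‖ * ‖y‖) ^ 2 := by
    calc _ ≤ (∑ i, ‖⟪e i, x⟫_ℂ‖ ^ 2) * ∑ i, ‖⟪f i, y⟫_ℂ‖ ^ 2 := hs
    _ ≤ ‖x‖ ^ 2 * ‖y‖ ^ 2 := by
        apply mul_le_mul hx hy (Finset.sum_nonneg fun i _ => sq_nonneg _) (sq_nonneg _)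
    _ = (‖x‖ * ‖y‖) ^ 2 := by ring
  have h0 : (0:ℝ) ≤ ∑ i, ‖⟪e i, x⟫_ℂ‖ * ‖⟪f i, y⟫_ℂ‖ :=
    Finset.sum_nonneg fun i _ => mul_nonneg (norm_nonneg _) (norm_nonneg _)
  exact (pow_le_pow_iff_left₀ h0 (mul_nonneg (norm_nonneg _) (norm_nonneg _)) two_ne_zero).mp h2

lemma traceNorm_le_two (x₁ y₁ x₂ y₂ : H) (T : H →L[ℂ] H)
    (hT : ∀ f, T f = ⟪y₁, f⟫_ℂ • x₁ + ⟪y₂, f⟫_ℂ • x₂) :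
    traceNorm T ≤ ENNReal.ofReal (‖x₁‖ * ‖y₁‖) + ENNReal.ofReal (‖x₂‖ * ‖y₂‖) := by
  refine iSup_le fun n => iSup_le fun e => iSup_le fun f => iSup_le fun he => iSup_le fun hf => ?_
  have key : ∑ i, ‖⟪e i, T (f i)⟫_ℂ‖ ≤ ‖x₁‖ * ‖y₁‖ + ‖x₂‖ * ‖y₂‖ := by
    have hterm : ∀ i, ‖⟪e i, T (f i)⟫_ℂ‖ ≤
        ‖⟪e i, x₁⟫_ℂ‖ * ‖⟪f i, y₁⟫_ℂ‖ + ‖⟪e i, x₂⟫_ℂ‖ * ‖⟪f i, y₂⟫_ℂ‖ := by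
      intro i
      rw [hT, inner_add_right, inner_smul_right, inner_smul_right]
      calc ‖⟪y₁, f i⟫_ℂ * ⟪e i, x₁⟫_ℂ + ⟪y₂, f i⟫_ℂ * ⟪e i, x₂⟫_ℂ‖
          ≤ ‖⟪y₁, f i⟫_ℂ * ⟪e i, x₁⟫_ℂ‖ + ‖⟪y₂, f i⟫_ℂ * ⟪e i, x₂⟫_ℂ‖ := norm_add_le _ _
        _ = ‖⟪e i, x₁⟫_ℂ‖ * ‖⟪f i, y₁⟫_ℂ‖ + ‖⟪e i, x₂⟫_ℂ‖ * ‖⟪f i, y₂⟫_ℂ‖ := by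
            rw [norm_mul, norm_mul, norm_inner_symm y₁, norm_inner_symm y₂]; ring
    calc ∑ i, ‖⟪e i, T (f i)⟫_ℂ‖
        ≤ ∑ i, (‖⟪e i, x₁⟫_ℂ‖ * ‖⟪f i, y₁⟫_ℂ‖ + ‖⟪e i, x₂⟫_ℂ‖ * ‖⟪f i, y₂⟫_ℂ‖) :=
          Finset.sum_le_sum fun i _ => hterm i
      _ = (∑ i, ‖⟪e i, x₁⟫_ℂ‖ * ‖⟪f i, y₁⟫_ℂ‖) + ∑ i, ‖⟪e i, x₂⟫_ℂ‖ * ‖⟪f i, y₂⟫_ℂ‖ :=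
          Finset.sum_add_distrib
      _ ≤ ‖x₁‖ * ‖y₁‖ + ‖x₂‖ * ‖y₂‖ :=
          add_le_add (bessel_pair he hf x₁ y₁) (bessel_pair he hf x₂ y₂)
  calc ∑ i, (‖⟪e i, T (f i)⟫_ℂ‖₊ : ℝ≥0∞) = ENNReal.ofReal (∑ i, ‖⟪e i, T (f i)⟫_ℂ‖) := by
        rw [ENNReal.ofReal_sum_of_nonneg fun i _ => norm_nonneg _]
        exact Finset.sum_congr rfl fun i _ => by rw [ofReal_norm_eq_enorm, enorm_eq_nnnorm]
    _ ≤ ENNReal.ofReal (‖x₁‖ * ‖y₁‖ + ‖x₂‖ * ‖y₂‖) := ENNReal.ofReal_le_ofReal key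
    _ = _ := ENNReal.ofReal_add (mul_nonneg (norm_nonneg _) (norm_nonneg _))
          (mul_nonneg (norm_nonneg _) (norm_nonneg _))

lemma IsRankOneProjection.exists_unit [CompleteSpace H] {P : H →L[ℂ] H}
    (hP : IsRankOneProjection P) : ∃ u : H, ‖u‖ = 1 ∧ ∀ f, P f = ⟪u, f⟫_ℂ • u := by
  obtain ⟨hsa, hidem, hrk⟩ := hP
  obtain ⟨v, hv0, hv⟩ := finrank_eq_one_iff'.mp hrk
  set x : H := (v : H) with hxdef
  have hx0 : x ≠ 0 := fun h => hv0 (Subtype.ext h)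
  have hxmem : x ∈ LinearMap.range (P : H →ₗ[ℂ] H) := v.2
  have hPfix : ∀ z : H, z ∈ LinearMap.range (P : H →ₗ[ℂ] H) → P z = z := by
    intro z hz
    obtain ⟨w, hw⟩ := hz
    have hw' : P w = z := hw
    have h2 : P (P w) = P w := by
      have := congrArg (fun T : H →L[ℂ] H => T w) hidem
      simpa using this
    rw [← hw']; exact h2
  set u : H := ((‖x‖ : ℂ))⁻¹ • x with hudef
  have hxnorm : ‖x‖ ≠ 0 := norm_ne_zero_iff.mpr hx0
  have hu1 : ‖u‖ = 1 := by
    rw [hudef, norm_smul, norm_inv]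
    simp [Complex.norm_real, abs_of_nonneg (norm_nonneg x), inv_mul_cancel₀ hxnorm]
  have hPu : P u = u := by
    rw [hudef, map_smul, hPfix x hxmem]
  refine ⟨u, hu1, fun f => ?_⟩
  have hsym := (ContinuousLinearMap.isSelfAdjoint_iff_isSymmetric.mp hsa)
  obtain ⟨c, hc⟩ := hv (⟨P f, LinearMap.mem_range.mpr ⟨f, rfl⟩⟩ : LinearMap.range (P : H →ₗ[ℂ] H))
  have hc' : (c * ‖x‖) • u = P f := by
    have := congrArg (Subtype.val) hc
    simp only [Submodule.coe_smul] at this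
    rw [hudef, smul_smul, mul_assoc, mul_inv_cancel₀ (by exact_mod_cast hxnorm), mul_one]
    exact this
  have hinner : ⟪u, P f⟫_ℂ = c * ‖x‖ := by
    rw [← hc', inner_smul_right, inner_self_eq_norm_sq_to_K, hu1]
    norm_num
  have hPuf : ⟪u, P f⟫_ℂ = ⟪u, f⟫_ℂ := by
    have h := hsym u f
    simp only [ContinuousLinearMap.coe_coe] at h
    rw [← h, hPu]
  rw [← hc', ← hinner, hPuf]

end AuxLemmas

open scoped InnerProductSpace in
/-- If a sequence `(p_n)` of rank-one orthogonal projections on a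
separable Hilbert space converges in the weak operator topology to a rank-one
orthogonal projection `p`, then `‖p_n − p‖₁ → 0`, i.e. `p_n → p` in trace norm. -/
theorem traceNorm_tendsto_zero_of_wot_tendsto
    {H : Type*} [NormedAddCommGroup H] [InnerProductSpace ℂ H] [CompleteSpace H]
    [TopologicalSpace.SeparableSpace H]
    (p : ℕ → H →L[ℂ] H) (q : H →L[ℂ] H)
    (hp : ∀ n, IsRankOneProjection (p n)) (hq : IsRankOneProjection q)
    (hconv : ∀ f g : H,
      Filter.Tendsto (fun n => ⟪g, p n f⟫_ℂ) Filter.atTop (nhds ⟪g, q f⟫_ℂ)) :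
    Filter.Tendsto (fun n => traceNorm (p n - q)) Filter.atTop (nhds 0) := by
  obtain ⟨v, hv1, hvrep⟩ := hq.exists_unit
  choose u hu1 hurep using fun n => (hp n).exists_unit
  set c : ℕ → ℂ := fun n => ⟪v, u n⟫_ℂ with hcdef
  set α : ℕ → ℂ := fun n => if c n = 0 then 1 else (starRingEnd ℂ) (c n) / ‖c n‖ with hαdef
  have hα : ∀ n, ‖α n‖ = 1 := by
    intro n
    by_cases h : c n = 0
    · simp [hαdef, h]
    · have hcn : ‖c n‖ ≠ 0 := norm_ne_zero_iff.mpr h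
      simp only [hαdef, if_neg h]
      rw [norm_div, RCLike.norm_conj]
      have habs : ‖c n‖ ≠ 0 := by
        exact hcn
      simp [abs_of_nonneg (norm_nonneg (c n)), div_self habs]
  set u' : ℕ → H := fun n => α n • u n with hu'def
  have hu'1 : ∀ n, ‖u' n‖ = 1 := fun n => by
    rw [hu'def]; simp [norm_smul, hα n, hu1 n]
  have hrep' : ∀ n f, p n f = ⟪u' n, f⟫_ℂ • u' n := by
    intro n f
    rw [hurep n f, hu'def]
    simp only [inner_smul_left, smul_smul]
    congr 1
    have key : (starRingEnd ℂ) (α n) * α n = 1 := by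
      rw [RCLike.conj_mul, hα n]
      norm_num
    calc ⟪u n, f⟫_ℂ = ((starRingEnd ℂ) (α n) * α n) * ⟪u n, f⟫_ℂ := by rw [key, one_mul]
      _ = (starRingEnd ℂ) (α n) * ⟪u n, f⟫_ℂ * α n := by ring
  set c' : ℕ → ℂ := fun n => ⟪v, u' n⟫_ℂ with hc'def
  have hc'mul : ∀ n, c' n = α n * c n := by
    intro n
    rw [hc'def]
    simp only [hu'def, inner_smul_right]
    rfl
  have hc'eq : ∀ n, c n ≠ 0 → c' n = (‖c n‖ : ℂ) := by
    intro n h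
    have hcn : ((‖c n‖ : ℝ) : ℂ) ≠ 0 := by
      exact_mod_cast norm_ne_zero_iff.mpr h
    rw [hc'mul n, hαdef]
    simp only [if_neg h]
    rw [div_mul_eq_mul_div, RCLike.conj_mul]
    have hcn' : ‖c n‖ ≠ 0 := norm_ne_zero_iff.mpr h
    rw [sq, mul_div_assoc]
    field_simp
    simp
  have hnormcc : ∀ n, ‖c' n‖ = ‖c n‖ := fun n => by
    rw [hc'mul n, norm_mul, hα n, one_mul]
  have h1 := hconv v v
  have hqv : ⟪v, q v⟫_ℂ = 1 := by
    rw [hvrep v, inner_smul_right, inner_self_eq_norm_sq_to_K, hv1]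
    norm_num
  have hfun : ∀ n, ⟪v, p n v⟫_ℂ = ((‖c' n‖ : ℝ) : ℂ) ^ 2 := by
    intro n
    rw [hrep' n v, inner_smul_right]
    have hconj : ⟪u' n, v⟫_ℂ = (starRingEnd ℂ) (c' n) := by rw [← inner_conj_symm]
    rw [hconj, RCLike.conj_mul]
    norm_cast
  have h1' : Filter.Tendsto (fun n => ((‖c' n‖ : ℝ) : ℂ) ^ 2) Filter.atTop (nhds 1) := by
    rw [← hqv]
    exact h1.congr fun n => hfun n
  have h2 : Filter.Tendsto (fun n => ‖c' n‖ ^ 2) Filter.atTop (nhds 1) := by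
    have := h1'.norm
    simpa [norm_pow, Complex.norm_real, abs_norm] using this
  have h3 : Filter.Tendsto (fun n => ‖c' n‖) Filter.atTop (nhds 1) := by
    have hs := h2.sqrt
    rw [Real.sqrt_one] at hs
    exact hs.congr fun n => Real.sqrt_sq (norm_nonneg _)
  have h4 : ∀ᶠ n in Filter.atTop, c n ≠ 0 := by
    have hev := h3.eventually (eventually_gt_nhds (by norm_num : (0:ℝ) < 1))
    refine hev.mono fun n hn => ?_
    intro h0
    rw [hnormcc n, h0, norm_zero] at hn
    exact lt_irrefl 0 hn
  have h5 : Filter.Tendsto (fun n => (c' n).re) Filter.atTop (nhds 1) := by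
    refine h3.congr' (h4.mono fun n hn => ?_)
    show ‖c' n‖ = (c' n).re
    rw [hnormcc n, hc'eq n hn, Complex.ofReal_re]
  have heq : ∀ n, ‖u' n - v‖ ^ 2 = 2 - 2 * (c' n).re := by
    intro n
    rw [@norm_sub_sq ℂ _ _ _ _ (u' n) v, hu'1 n, hv1]
    have hconj : ⟪u' n, v⟫_ℂ = (starRingEnd ℂ) (c' n) := by rw [← inner_conj_symm]
    rw [hconj]
    simp only [RCLike.re_to_complex, Complex.conj_re]
    ring
  have h6 : Filter.Tendsto (fun n => ‖u' n - v‖ ^ 2) Filter.atTop (nhds 0) := by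
    have hlim : Filter.Tendsto (fun n => 2 - 2 * (c' n).re) Filter.atTop (nhds 0) := by
      have := (tendsto_const_nhds (x := (2:ℝ)) (f := Filter.atTop)).sub (h5.const_mul 2)
      simpa using this
    exact hlim.congr fun n => (heq n).symm
  have h7 : Filter.Tendsto (fun n => ‖u' n - v‖) Filter.atTop (nhds 0) := by
    have hs := h6.sqrt
    rw [Real.sqrt_zero] at hs
    exact hs.congr fun n => Real.sqrt_sq (norm_nonneg _)
  have hb : ∀ n, traceNorm (p n - q) ≤ ENNReal.ofReal (2 * ‖u' n - v‖) := by
    intro n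
    have hT : ∀ f, (p n - q) f = ⟪u' n - v, f⟫_ℂ • u' n + ⟪v, f⟫_ℂ • (u' n - v) := by
      intro f
      rw [ContinuousLinearMap.sub_apply, hrep' n f, hvrep f]
      simp only [inner_sub_left, sub_smul, smul_sub]
      abel
    calc traceNorm (p n - q)
        ≤ ENNReal.ofReal (‖u' n‖ * ‖u' n - v‖) + ENNReal.ofReal (‖u' n - v‖ * ‖v‖) :=
          traceNorm_le_two _ _ _ _ _ hT
      _ = ENNReal.ofReal (2 * ‖u' n - v‖) := by
          rw [hu'1 n, hv1, one_mul, mul_one,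
            ← ENNReal.ofReal_add (norm_nonneg _) (norm_nonneg _), two_mul]
  have hub : Filter.Tendsto (fun n => ENNReal.ofReal (2 * ‖u' n - v‖)) Filter.atTop (nhds 0) := by
    have := ENNReal.tendsto_ofReal (h7.const_mul 2)
    simpa using this
  exact tendsto_of_tendsto_of_tendsto_of_le_of_le tendsto_const_nhds hub
    (fun n => zero_le) hb
end
end

section
/- Let A and B be unital C*-algebras with B commutative, and let η be a pure state on the C*-tensor product A ⊗ B restricted via b ↦ η(1 ⊗ b) to a state μ_η on B. Then μ_η is a pure state of B, i.e., it is multiplicative: μ_η(b₁b₂) = μ_η(b₁)μ_η(b₂). -/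
open scoped ComplexOrder

noncomputable section

/-- A state on a (possibly non-unital) C*-algebra: a positive continuous linear
functional of norm 1, as an element of the weak-* dual. -/
def IsState {A : Type*} [NonUnitalNormedRing A] [StarRing A] [NormedSpace ℂ A]
    (φ : WeakDual ℂ A) : Prop :=
  (∀ a : A, 0 ≤ φ (star a * a)) ∧ ‖WeakDual.toStrongDual φ‖ = 1

/-- A pure state: a state which is not a nontrivial convex combination of two
distinct states. -/
def IsPureState {A : Type*} [NonUnitalNormedRing A] [StarRing A] [NormedSpace ℂ A]
    (φ : WeakDual ℂ A) : Prop :=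
  IsState φ ∧ ∀ (φ₁ φ₂ : WeakDual ℂ A) (t : ℝ), IsState φ₁ → IsState φ₂ →
    0 < t → t < 1 → φ = ((t : ℂ)) • φ₁ + ((1 - t : ℝ) : ℂ) • φ₂ → φ₁ = φ₂

section Aux
set_option linter.unusedSectionVars false

variable {E : Type*} [NormedRing E] [StarRing E] [CStarRing E] [NormedAlgebra ℂ E]
  [StarModule ℂ E] [CompleteSpace E]

lemma aux_im (φ : E →L[ℂ] ℂ) (hφ : ∀ a : E, 0 ≤ φ (star a * a)) (a : E) :
    (φ (star a * a)).im = 0 :=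
  ((Complex.nonneg_iff.mp (hφ a)).2).symm

lemma aux_re (φ : E →L[ℂ] ℂ) (hφ : ∀ a : E, 0 ≤ φ (star a * a)) (a : E) :
    0 ≤ (φ (star a * a)).re :=
  (Complex.nonneg_iff.mp (hφ a)).1

lemma aux_herm (φ : E →L[ℂ] ℂ) (hφ : ∀ a : E, 0 ≤ φ (star a * a)) (a b : E) :
    φ (star b * a) = starRingEnd ℂ (φ (star a * b)) := by
  have key : ∀ u v : E, (φ (star u * v) + φ (star v * u)).im = 0 := by
    intro u v
    have h := aux_im φ hφ (u + v)
    rw [star_add, add_mul, mul_add, mul_add, map_add, map_add, map_add] at h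
    have hu := aux_im φ hφ u
    have hv := aux_im φ hφ v
    simp only [Complex.add_im] at h ⊢
    linarith
  have h1 := key a b
  have h2 := key a (Complex.I • b)
  rw [star_smul, smul_mul_assoc, mul_smul_comm, map_smul, map_smul] at h2
  simp only [Complex.star_def, Complex.conj_I, smul_eq_mul, neg_mul, Complex.add_im,
    Complex.mul_im, Complex.I_re, Complex.I_im, Complex.neg_im, Complex.neg_re] at h2
  simp only [Complex.add_im] at h1
  apply Complex.ext <;> simp only [Complex.conj_re, Complex.conj_im] <;> linarith

lemma aux_cs (φ : E →L[ℂ] ℂ) (hφ : ∀ a : E, 0 ≤ φ (star a * a)) (x y : E) :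
    ‖φ (star x * y)‖ ^ 2 ≤ (φ (star x * x)).re * (φ (star y * y)).re := by
  by_cases h0 : φ (star x * y) = 0
  · rw [h0]
    simpa using mul_nonneg (aux_re φ hφ x) (aux_re φ hφ y)
  · set s := φ (star x * y) with hs
    have hcs : (↑‖s‖ / s) * s = (‖s‖ : ℂ) := div_mul_cancel₀ _ h0
    set c : ℂ := (‖s‖ : ℂ) / s with hc
    set w := c • y with hw
    have hw1 : φ (star x * w) = (‖s‖ : ℂ) := by
      rw [hw, mul_smul_comm, map_smul, smul_eq_mul, ← hs, hcs]
    have hw2 : φ (star w * x) = (‖s‖ : ℂ) := by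
      rw [aux_herm φ hφ x w, hw1]
      simp
    have hww : star w * w = star y * y := by
      have hc1 : (starRingEnd ℂ) c * c = 1 := by
        have hnc : ‖c‖ = 1 := by
          rw [hc, norm_div, Complex.norm_real, Real.norm_eq_abs, abs_norm,
            div_self (norm_ne_zero_iff.mpr h0)]
        rw [mul_comm, Complex.mul_conj]
        simp only [Complex.normSq_eq_norm_sq, hnc]
        norm_num
      rw [hw, star_smul, smul_mul_assoc, mul_smul_comm, smul_smul, Complex.star_def, hc1,
        one_smul]
    have quad : ∀ t : ℝ, 0 ≤ (φ (star x * x)).re * (t * t) + (2 * ‖s‖) * t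
        + (φ (star y * y)).re := by
      intro t
      have hexp : star ((t:ℂ)•x + w) * ((t:ℂ)•x + w)
          = ((t:ℂ)*(t:ℂ)) • (star x * x)
            + ((t:ℂ) • (star x * w) + ((t:ℂ) • (star w * x) + star w * w)) := by
        simp [star_add, star_smul, Complex.star_def, Complex.conj_ofReal, add_mul, mul_add,
          smul_mul_assoc, mul_smul_comm, smul_smul, add_assoc]
        ring_nf
        abel_nf
        norm_cast
        abel
      have h := (Complex.nonneg_iff.mp (hφ ((t : ℂ) • x + w))).1
      rw [hexp, map_add, map_add, map_add, map_smul, map_smul, map_smul, hw1, hw2, hww] at h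
      simp only [smul_eq_mul, Complex.add_re, Complex.mul_re, Complex.ofReal_re,
        Complex.ofReal_im, Complex.mul_im] at h
      have himx := aux_im φ hφ x
      have himy := aux_im φ hφ y
      nlinarith [h]
    have hd := discrim_le_zero quad
    rw [discrim] at hd
    nlinarith [hd]

lemma aux_pos_map (φ : E →L[ℂ] ℂ) (hφ : ∀ a : E, 0 ≤ φ (star a * a))
    [PartialOrder E] [StarOrderedRing E] {z : E} (hz : 0 ≤ z) : 0 ≤ φ z := by
  rw [StarOrderedRing.nonneg_iff] at hz
  induction hz using AddSubmonoid.closure_induction with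
  | mem x hx => obtain ⟨s, rfl⟩ := hx; exact hφ s
  | zero => simp
  | add x y _ _ hx hy => rw [map_add]; exact add_nonneg hx hy

lemma aux_sq_bound (φ : E →L[ℂ] ℂ) (hφ : ∀ a : E, 0 ≤ φ (star a * a))
    [PartialOrder E] [StarOrderedRing E] (a : E) :
    (φ (star a * a)).re ≤ ‖a‖ ^ 2 * (φ 1).re := by
  letI : CStarAlgebra E :=
    { toNormedRing := ‹_›, toStarRing := ‹_›, toCompleteSpace := ‹_›, toCStarRing := ‹_›,
      toNormedAlgebra := ‹_›, toStarModule := ‹_› }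
  have h1 : star a * a ≤ algebraMap ℝ E ‖star a * a‖ :=
    IsSelfAdjoint.le_algebraMap_norm_self (IsSelfAdjoint.star_mul_self a)
  have h2 : 0 ≤ φ (algebraMap ℝ E ‖star a * a‖ - star a * a) :=
    aux_pos_map φ hφ (sub_nonneg.mpr h1)
  rw [map_sub, Algebra.algebraMap_eq_smul_one, φ.map_smul_of_tower] at h2
  have h3 := (Complex.nonneg_iff.mp h2).1
  rw [Complex.sub_re, Complex.real_smul, Complex.mul_re, Complex.ofReal_re,
    Complex.ofReal_im] at h3
  rw [CStarRing.norm_star_mul_self] at h3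
  nlinarith [h3]

lemma aux_norm_eq (φ : E →L[ℂ] ℂ) (hφ : ∀ a : E, 0 ≤ φ (star a * a))
    [PartialOrder E] [StarOrderedRing E] [Nontrivial E] : ‖φ‖ = (φ 1).re := by
  have h1 : 0 ≤ (φ 1).re := by simpa using aux_re φ hφ 1
  refine le_antisymm (φ.opNorm_le_bound h1 fun a => ?_) ?_
  · have hcs := aux_cs φ hφ 1 a
    simp only [star_one, one_mul] at hcs
    have hb := aux_sq_bound φ hφ a
    have ha2 : 0 ≤ (φ (star a * a)).re := aux_re φ hφ a
    nlinarith [norm_nonneg (φ a), norm_nonneg a, hcs, hb, mul_nonneg h1 (norm_nonneg a),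
      mul_nonneg h1 ha2]
  · calc (φ 1).re ≤ ‖φ 1‖ := Complex.re_le_norm _
      _ ≤ ‖φ‖ * ‖(1 : E)‖ := φ.le_opNorm 1
      _ = ‖φ‖ := by rw [norm_one, mul_one]

lemma aux_state_one (φ : E →L[ℂ] ℂ) (hφ : ∀ a : E, 0 ≤ φ (star a * a))
    [PartialOrder E] [StarOrderedRing E] [Nontrivial E] (hn : ‖φ‖ = 1) : φ 1 = 1 := by
  have h := aux_norm_eq φ hφ
  have him : (φ 1).im = 0 := by simpa using aux_im φ hφ 1
  apply Complex.ext
  · rw [← h, hn]; simp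
  · simp [him]

lemma aux_real_mul_nonneg {r : ℝ} {w : ℂ} (hr : 0 ≤ r) (hw : 0 ≤ w) : 0 ≤ (r : ℂ) * w := by
  rw [Complex.nonneg_iff] at hw ⊢
  constructor
  · rw [Complex.re_ofReal_mul]; exact mul_nonneg hr hw.1
  · rw [Complex.im_ofReal_mul, ← hw.2, mul_zero]

end Aux

set_option maxHeartbeats 1000000 in
/-- Let `A` be a unital C*-algebra and `B` a commutative unital
C*-algebra, so that `B ≅ C(X)` for a compact Hausdorff space `X` and the
C*-tensor product `A ⊗ B` is realized as `C(X, A)`, with `1 ⊗ b` the function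
`x ↦ b(x)·1`.  If `η` is a pure state on `A ⊗ B ≅ C(X, A)`, then the state
`μ_η : b ↦ η(1 ⊗ b)` on `B ≅ C(X)` is pure, i.e. it is multiplicative:
`μ_η(b₁b₂) = μ_η(b₁)μ_η(b₂)`. -/
theorem pureState_restriction_multiplicative
    {X A : Type*} [TopologicalSpace X] [CompactSpace X] [T2Space X]
    [NormedRing A] [StarRing A] [CStarRing A] [NormedAlgebra ℂ A] [StarModule ℂ A]
    [CompleteSpace A]
    (η : WeakDual ℂ C(X, A)) (hη : IsPureState η)
    (M : C(X, ℂ) → C(X, A)) (hM : ∀ (b : C(X, ℂ)) (x : X), (M b) x = b x • (1 : A)) :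
    ∀ b₁ b₂ : C(X, ℂ), η (M (b₁ * b₂)) = η (M b₁) * η (M b₂) := by
  classical
  obtain ⟨⟨hpos, hnorm⟩, hpure⟩ := hη
  set φ : C(X, A) →L[ℂ] ℂ := WeakDual.toStrongDual η with hφdef
  have hφapp : ∀ a, φ a = η a := fun a => rfl
  have hpos' : ∀ a : C(X, A), 0 ≤ φ (star a * a) := hpos
  haveI hnt : Nontrivial C(X, A) := by
    by_contra h
    rw [not_nontrivial_iff_subsingleton] at h
    have hz : φ = 0 := by ext a; rw [Subsingleton.elim a 0]; simp
    rw [hz] at hnorm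
    simp at hnorm
  letI : CStarAlgebra C(X, A) :=
    { toNormedRing := inferInstance, toStarRing := inferInstance,
      toCompleteSpace := inferInstance, toCStarRing := inferInstance,
      toNormedAlgebra := inferInstance, toStarModule := inferInstance }
  letI : PartialOrder C(X, A) := CStarAlgebra.spectralOrder _
  haveI : StarOrderedRing C(X, A) := CStarAlgebra.spectralOrderedRing _
  have hone : φ 1 = 1 := aux_state_one φ hpos' hnorm
  -- real-valued continuous functions as elements of C(X, ℂ)
  let ι : C(X, ℝ) → C(X, ℂ) := fun g =>
    ⟨fun x => (g x : ℂ), Complex.continuous_ofReal.comp g.continuous⟩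
  have hι : ∀ (g : C(X, ℝ)) (x : X), ι g x = (g x : ℂ) := fun _ _ => rfl
  let sqg : C(X, ℝ) → C(X, ℝ) := fun g =>
    ⟨fun x => Real.sqrt (g x), Real.continuous_sqrt.comp g.continuous⟩
  have hcentral : ∀ (b : C(X, ℂ)) (z : C(X, A)), M b * z = z * M b := by
    intro b z; ext x
    simp only [ContinuousMap.mul_apply, hM]
    rw [smul_mul_assoc, one_mul, mul_smul_comm, mul_one]
  have hMmul : ∀ b c : C(X, ℂ), M (b * c) = M b * M c := by
    intro b c; ext x
    simp only [ContinuousMap.mul_apply, hM]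
    rw [smul_mul_assoc, one_mul, smul_smul]
  have hstarM : ∀ g : C(X, ℝ), star (M (ι g)) = M (ι g) := by
    intro g; ext x
    simp only [ContinuousMap.star_apply, hM, hι, star_smul, star_one, Complex.star_def,
      Complex.conj_ofReal]
  have hM1 : M 1 = 1 := by
    ext x; simp [hM]
  have hMsub1 : ∀ g : C(X, ℝ), M (ι (1 - g)) = 1 - M (ι g) := by
    intro g; ext x
    simp only [ContinuousMap.sub_apply, ContinuousMap.one_apply, hM, hι,
      Complex.ofReal_sub, Complex.ofReal_one, sub_smul, one_smul]
  have hsq : ∀ g : C(X, ℝ), (∀ x, 0 ≤ g x) → M (ι (sqg g)) * M (ι (sqg g)) = M (ι g) := by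
    intro g hg; ext x
    simp only [ContinuousMap.mul_apply, hM, hι]
    rw [smul_mul_assoc, one_mul, smul_smul]
    congr 1
    rw [show (sqg g) x = Real.sqrt (g x) from rfl, ← Complex.ofReal_mul,
      Real.mul_self_sqrt (hg x)]
  have hgpos : ∀ g : C(X, ℝ), (∀ x, 0 ≤ g x) → ∀ a : C(X, A),
      0 ≤ φ (M (ι g) * (star a * a)) := by
    intro g hg a
    have h := hpos' (a * M (ι (sqg g)))
    have he : star (a * M (ι (sqg g))) * (a * M (ι (sqg g)))
        = M (ι g) * (star a * a) := by
      rw [star_mul, hstarM, mul_assoc, ← mul_assoc (star a) a (M (ι (sqg g))),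
        ← hcentral (ι (sqg g)) (star a * a), ← mul_assoc, hsq g hg]
    rwa [he] at h
  have hreal : ∀ g : C(X, ℝ), (∀ x, 0 ≤ g x) → ∃ r : ℝ, 0 ≤ r ∧ φ (M (ι g)) = (r : ℂ) := by
    intro g hg
    have h := hgpos g hg 1
    rw [star_one, one_mul, mul_one] at h
    rw [Complex.nonneg_iff] at h
    refine ⟨(φ (M (ι g))).re, h.1, ?_⟩
    apply Complex.ext <;> simp [← h.2]
  have claim_zero : ∀ g : C(X, ℝ), (∀ x, 0 ≤ g x) → φ (M (ι g)) = 0 →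
      ∀ a : C(X, A), φ (M (ι g) * a) = 0 := by
    intro g hg h0 a
    have hcs := aux_cs φ hpos' (M (ι (sqg g))) (M (ι (sqg g)) * a)
    have e1 : star (M (ι (sqg g))) * (M (ι (sqg g)) * a) = M (ι g) * a := by
      rw [hstarM, ← mul_assoc, hsq g hg]
    have e2 : star (M (ι (sqg g))) * M (ι (sqg g)) = M (ι g) := by
      rw [hstarM, hsq g hg]
    rw [e1, e2, h0] at hcs
    simp only [Complex.zero_re, zero_mul] at hcs
    have h1 : ‖φ (M (ι g) * a)‖ = 0 := by
      nlinarith [norm_nonneg (φ (M (ι g) * a)), hcs]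
    exact norm_eq_zero.mp h1
  have claimC : ∀ g : C(X, ℝ), (∀ x, g x ∈ Set.Icc (0:ℝ) 1) →
      ∀ a : C(X, A), φ (M (ι g) * a) = φ (M (ι g)) * φ a := by
    intro g hg a
    obtain ⟨t, ht0, htval⟩ := hreal g (fun x => (hg x).1)
    have hg1 : ∀ x, 0 ≤ (1 - g) x := by
      intro x
      simp only [ContinuousMap.sub_apply, ContinuousMap.one_apply]
      linarith [(hg x).2]
    have ht1 : t ≤ 1 := by
      obtain ⟨r, hr0, hrval⟩ := hreal (1 - g) hg1
      have hsub : φ (M (ι (1 - g))) = φ 1 - φ (M (ι g)) := by rw [hMsub1, map_sub]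
      rw [hrval, hone, htval] at hsub
      have h' : r = 1 - t := by exact_mod_cast hsub
      linarith
    rcases eq_or_lt_of_le ht0 with h0 | h0pos
    · rw [htval, ← h0, Complex.ofReal_zero, zero_mul]
      exact claim_zero g (fun x => (hg x).1) (by rw [htval, ← h0]; simp) a
    rcases eq_or_lt_of_le ht1 with h1 | h1lt
    · have hz : φ (M (ι (1 - g))) = 0 := by
        rw [hMsub1, map_sub, hone, htval, h1]
        norm_num
      have hza := claim_zero (1 - g) hg1 hz a
      rw [hMsub1, sub_mul, one_mul, map_sub, sub_eq_zero] at hza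
      rw [htval, h1, Complex.ofReal_one, one_mul]
      exact hza.symm
    · -- main case 0 < t < 1
      set z := M (ι g) with hzdef
      set ψ : C(X, A) →L[ℂ] ℂ := φ.comp ((ContinuousLinearMap.mul ℂ C(X, A)) z) with hψdef
      have hψapp : ∀ w, ψ w = φ (z * w) := fun w => rfl
      have hψpos : ∀ w : C(X, A), 0 ≤ ψ (star w * w) := fun w =>
        hgpos g (fun x => (hg x).1) w
      have hψ1 : ψ 1 = (t : ℂ) := by rw [hψapp, mul_one, htval]
      have hψnorm : ‖ψ‖ = t := by
        rw [aux_norm_eq ψ hψpos, hψ1, Complex.ofReal_re]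
      set χ : C(X, A) →L[ℂ] ℂ := φ - ψ with hχdef
      have hχapp : ∀ w, χ w = φ w - φ (z * w) := fun w => rfl
      have hχpos : ∀ w : C(X, A), 0 ≤ χ (star w * w) := by
        intro w
        have h := hgpos (1 - g) hg1 w
        rw [hMsub1, sub_mul, one_mul, map_sub] at h
        simpa [hχdef, ContinuousLinearMap.sub_apply, hψapp] using h
      have hχ1 : χ 1 = ((1 - t : ℝ) : ℂ) := by
        have : χ 1 = φ 1 - φ (z * 1) := hχapp 1
        rw [this, mul_one, hone, htval]
        push_cast
        ring
      have hχnorm : ‖χ‖ = 1 - t := by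
        rw [aux_norm_eq χ hχpos, hχ1, Complex.ofReal_re]
      have htne : (t : ℂ) ≠ 0 := by
        exact_mod_cast (ne_of_gt h0pos)
      have h1tne : ((1 - t : ℝ) : ℂ) ≠ 0 := by
        have : (0:ℝ) < 1 - t := by linarith
        exact_mod_cast (ne_of_gt this)
      set ψ₁ : C(X, A) →L[ℂ] ℂ := (t : ℂ)⁻¹ • ψ with hψ₁def
      set χ₂ : C(X, A) →L[ℂ] ℂ := ((1 - t : ℝ) : ℂ)⁻¹ • χ with hχ₂def
      set φ₁ : WeakDual ℂ C(X, A) := (show WeakDual ℂ C(X, A) from ψ₁) with hφ₁def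
      set φ₂ : WeakDual ℂ C(X, A) := (show WeakDual ℂ C(X, A) from χ₂) with hφ₂def
      have cancel : ∀ u : ℂ, u ≠ 0 → ∀ v : ℂ, u * (u⁻¹ * v) = v := fun u hu v => by
        rw [← mul_assoc, mul_inv_cancel₀ hu, one_mul]
      have hφ₁app : ∀ w, φ₁ w = (t : ℂ)⁻¹ * ψ w := fun w => rfl
      have hφ₂app : ∀ w, φ₂ w = ((1 - t : ℝ) : ℂ)⁻¹ * χ w := fun w => rfl
      have hs1 : IsState φ₁ := by
        constructor
        · intro a
          rw [hφ₁app]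
          have : (t : ℂ)⁻¹ = ((t⁻¹ : ℝ) : ℂ) := by push_cast; ring
          rw [this]
          exact aux_real_mul_nonneg (by positivity) (hψpos a)
        · show ‖ψ₁‖ = 1
          rw [show ψ₁ = (t : ℂ)⁻¹ • ψ from rfl, show ∀ (c : ℂ) (F : C(X, A) →L[ℂ] ℂ), ‖c • F‖ = ‖c‖ * ‖F‖
            from fun c F => norm_smul c F, hψnorm, norm_inv, Complex.norm_real, Real.norm_eq_abs,
            abs_of_pos h0pos, inv_mul_cancel₀ (ne_of_gt h0pos)]
      have hs2 : IsState φ₂ := by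
        constructor
        · intro a
          rw [hφ₂app]
          have : ((1 - t : ℝ) : ℂ)⁻¹ = (((1 - t)⁻¹ : ℝ) : ℂ) := by push_cast; ring
          rw [this]
          exact aux_real_mul_nonneg (inv_nonneg.mpr (by linarith)) (hχpos a)
        · show ‖χ₂‖ = 1
          rw [show χ₂ = ((1 - t : ℝ) : ℂ)⁻¹ • χ from rfl, show ∀ (c : ℂ) (F : C(X, A) →L[ℂ] ℂ), ‖c • F‖ = ‖c‖ * ‖F‖
            from fun c F => norm_smul c F, hχnorm, norm_inv, Complex.norm_real, Real.norm_eq_abs,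
            abs_of_pos (by linarith : (0:ℝ) < 1 - t),
            inv_mul_cancel₀ (by linarith : (1 - t : ℝ) ≠ 0)]
      have hdecomp : η = ((t : ℂ)) • φ₁ + ((1 - t : ℝ) : ℂ) • φ₂ := by
        apply DFunLike.ext
        intro w
        show φ w = ((t : ℂ)) • φ₁ w + ((1 - t : ℝ) : ℂ) • φ₂ w
        rw [hφ₁app, hφ₂app, hχapp, ← hψapp]
        rw [smul_eq_mul, smul_eq_mul, cancel _ htne, cancel _ h1tne]
        ring
      have heq := hpure φ₁ φ₂ t hs1 hs2 h0pos h1lt hdecomp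
      have hkey : (t : ℂ)⁻¹ * ψ a = ((1 - t : ℝ) : ℂ)⁻¹ * χ a := by
        have := DFunLike.congr_fun heq a
        rwa [hφ₁app, hφ₂app] at this
      rw [hχapp, ← hψapp] at hkey
      have h3 : ψ a = (t : ℂ) * (((1 - t : ℝ) : ℂ)⁻¹ * (φ a - ψ a)) := by
        rw [← hkey, cancel _ htne]
      have h4 := congrArg (fun v => ((1 - t : ℝ) : ℂ) * v) h3
      simp only [mul_left_comm (((1 - t : ℝ) : ℂ)) ((t : ℂ)), cancel _ h1tne] at h4
      have h5 : ψ a = (t : ℂ) * φ a := by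
        push_cast at h4 ⊢
        linear_combination h4
      rw [← hψapp, h5, htval]
  -- extend to all real-valued g
  have stepR : ∀ g : C(X, ℝ), ∀ a : C(X, A), φ (M (ι g) * a) = φ (M (ι g)) * φ a := by
    intro g a
    set c : ℝ := ‖g‖ + 1 with hcdef
    have hc : 0 < c := by positivity
    have hbound : ∀ x, |g x| ≤ ‖g‖ := fun x => by
      simpa [Real.norm_eq_abs] using g.norm_coe_le_norm x
    set gp : C(X, ℝ) := (2 * c)⁻¹ • (g + c • (1 : C(X, ℝ))) with hgpdef
    have hgpapp : ∀ x, gp x = (2 * c)⁻¹ * (g x + c) := by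
      intro x
      simp [hgpdef, ContinuousMap.smul_apply, ContinuousMap.add_apply]
      ring
    have hgp : ∀ x, gp x ∈ Set.Icc (0:ℝ) 1 := by
      intro x
      rw [hgpapp]
      constructor
      · have h1 := (abs_le.mp (hbound x)).1
        have h2 : 0 ≤ g x + c := by rw [hcdef]; linarith
        positivity
      · have h1 := (abs_le.mp (hbound x)).2
        rw [inv_mul_le_iff₀ (by positivity), mul_one]
        rw [hcdef]; linarith
    have hdec : M (ι g) = ((2 * c : ℝ) : ℂ) • M (ι gp) - ((c : ℝ) : ℂ) • 1 := by
      ext x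
      simp only [ContinuousMap.sub_apply, ContinuousMap.smul_apply, ContinuousMap.one_apply,
        hM, hι, smul_smul]
      rw [← sub_smul]
      congr 1
      rw [hgpapp]
      push_cast
      field_simp
      ring
    have e1 : φ (M (ι g) * a) = ((2 * c : ℝ) : ℂ) * φ (M (ι gp) * a) - ((c : ℝ) : ℂ) * φ a := by
      rw [hdec, sub_mul, smul_mul_assoc, smul_mul_assoc, one_mul, map_sub, map_smul, map_smul,
        smul_eq_mul, smul_eq_mul]
    have e2 : φ (M (ι g)) = ((2 * c : ℝ) : ℂ) * φ (M (ι gp)) - ((c : ℝ) : ℂ) := by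
      rw [hdec, map_sub, map_smul, map_smul, hone, smul_eq_mul, smul_eq_mul, mul_one]
    rw [e1, e2, claimC gp hgp a]
    ring
  -- extend to all complex b
  have stepC : ∀ b : C(X, ℂ), ∀ a : C(X, A), φ (M b * a) = φ (M b) * φ a := by
    intro b a
    set g₁ : C(X, ℝ) := ⟨fun x => (b x).re, Complex.continuous_re.comp b.continuous⟩ with hg₁
    set g₂ : C(X, ℝ) := ⟨fun x => (b x).im, Complex.continuous_im.comp b.continuous⟩ with hg₂
    have hb : M b = M (ι g₁) + Complex.I • M (ι g₂) := by
      ext x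
      simp only [ContinuousMap.add_apply, ContinuousMap.smul_apply, hM, hι, smul_smul]
      rw [← add_smul]
      congr 1
      rw [show g₁ x = (b x).re from rfl, show g₂ x = (b x).im from rfl]
      rw [mul_comm]
      exact (Complex.re_add_im (b x)).symm
    rw [hb, add_mul, smul_mul_assoc, map_add, map_smul, map_add, map_smul, stepR g₁ a,
      stepR g₂ a, smul_eq_mul, smul_eq_mul]
    ring
  intro b₁ b₂
  show φ (M (b₁ * b₂)) = φ (M b₁) * φ (M b₂)
  rw [hMmul, stepC b₁ (M b₂)]
end
end
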